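/- arXiv:2307.01655 — 3 statements merged into one kernel-verified Lean document; each statement's English description precedes it below -/
import Mathlib

section
/- Let H be differentiable, L-smooth, and let W, P be symmetric positive semidefinite matrices with PW = WP = W, P² = P, λ_min⁺·P ⪯ W (in the sense ⟨v,Wv⟩ ≥ λ_min⁺⟨v,Pv⟩ for v with Pv in the relevant range) and W ⪯ λ_max·I. Then for θ = 1/(L·λ_max) and any z with ∇H(z) satisfying P∇H(z)-compatibility, H(z - θ W ∇H(z)) ≤ H(z) - (θ·λ_min⁺/2)·‖∇H(z)‖²_P, where ‖u‖²_P = ⟨u, P u⟩. -/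
/-!
With `θ = 1 / (L λ_max)`, the quadratic upper bound from `L`-smoothness at the step
`-θ W ∇H(z)` gives a decrease of at least `θ ⟪g, W g⟫ - (L θ² / 2) ‖W g‖²`, `g = ∇H(z)`.
Cauchy–Schwarz for the semi-inner product `⟪·, W ·⟫` together with `W ⪯ λ_max` yields
`‖W g‖² ≤ λ_max ⟪g, W g⟫`, so the decrease is at least `(θ / 2) ⟪g, W g⟫`, and `λ_min⁺ P ⪯ W`
finishes.
-/

open scoped RealInnerProductSpace

variable {E : Type*} [NormedAddCommGroup E] [InnerProductSpace ℝ E]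

namespace LinearMap.IsPositive

variable {T : E →ₗ[ℝ] E}

theorem inner_map_sq_le (hT : T.IsPositive) (x y : E) :
    ⟪x, T y⟫ ^ 2 ≤ ⟪x, T x⟫ * ⟪y, T y⟫ :=
  LinearMap.BilinForm.apply_sq_le_of_symm ((innerₗ E).compl₂ T) hT.inner_nonneg_right
    (LinearMap.isSymm_def.mpr fun u v => (hT.isSymmetric u v).symm.trans (real_inner_comm _ _))
    x y

theorem norm_map_sq_le {c : ℝ} (hT : T.IsPositive) (hc : ∀ v, ⟪v, T v⟫ ≤ c * ‖v‖ ^ 2) (x : E) :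
    ‖T x‖ ^ 2 ≤ c * ⟪x, T x⟫ := by
  have hsq : ‖T x‖ ^ 2 = ⟪x, T (T x)⟫ := by
    rw [← real_inner_self_eq_norm_sq, hT.isSymmetric]
  have hCS : (‖T x‖ ^ 2) ^ 2 ≤ ⟪x, T x⟫ * (c * ‖T x‖ ^ 2) :=
    calc (‖T x‖ ^ 2) ^ 2 = ⟪x, T (T x)⟫ ^ 2 := by rw [hsq]
      _ ≤ ⟪x, T x⟫ * ⟪T x, T (T x)⟫ := hT.inner_map_sq_le x (T x)
      _ ≤ ⟪x, T x⟫ * (c * ‖T x‖ ^ 2) :=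
        mul_le_mul_of_nonneg_left (hc (T x)) (hT.inner_nonneg_right x)
  have hcq : 0 ≤ c * ⟪x, T x⟫ := by
    rcases (hT.inner_nonneg_right x).eq_or_lt with hq | hq
    · rw [← hq, mul_zero]
    · have hc0 : 0 < c := by nlinarith [hc x, sq_nonneg ‖x‖]
      positivity
  nlinarith [sq_nonneg ‖T x‖]

end LinearMap.IsPositive

theorem le_sub_of_quadratic_upper_bound {f : E → ℝ} {T : E →ₗ[ℝ] E} {x g : E} {L c θ : ℝ}
    (hf : ∀ y, f y ≤ f x + ⟪g, y - x⟫ + L / 2 * ‖y - x‖ ^ 2) (hT : T.IsPositive)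
    (hc : ∀ v, ⟪v, T v⟫ ≤ c * ‖v‖ ^ 2) (hL : 0 ≤ L) (hθ : L * c * θ = 1) :
    f (x - θ • T g) ≤ f x - θ / 2 * ⟪g, T g⟫ := by
  have hstep := hf (x - θ • T g)
  rw [sub_sub_cancel_left, inner_neg_right, real_inner_smul_right, norm_neg, norm_smul, mul_pow,
    Real.norm_eq_abs, sq_abs] at hstep
  calc f (x - θ • T g) ≤ f x - θ * ⟪g, T g⟫ + L / 2 * (θ ^ 2 * ‖T g‖ ^ 2) := by linarith
    _ ≤ f x - θ * ⟪g, T g⟫ + L / 2 * (θ ^ 2 * (c * ⟪g, T g⟫)) := by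
      gcongr
      exact hT.norm_map_sq_le hc g
    _ = f x - θ / 2 * ⟪g, T g⟫ := by linear_combination θ * ⟪g, T g⟫ / 2 * hθ

theorem stmt_1_general {m : ℕ} (H : EuclideanSpace ℝ (Fin m) → ℝ)
    (gradH : EuclideanSpace ℝ (Fin m) → EuclideanSpace ℝ (Fin m))
    (L lammin lammax : ℝ) (hL : 0 < L) (hlmax : 0 < lammax)
    (hsmooth : ∀ x y, H y ≤ H x + ⟪gradH x, y - x⟫ + L / 2 * ‖y - x‖ ^ 2)
    (W P : EuclideanSpace ℝ (Fin m) →ₗ[ℝ] EuclideanSpace ℝ (Fin m))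
    (hWsym : ∀ u v, ⟪W u, v⟫ = ⟪u, W v⟫) (hWpsd : ∀ v, 0 ≤ ⟪v, W v⟫)
    (hmin : ∀ v, lammin * ⟪v, P v⟫ ≤ ⟪v, W v⟫)
    (hmax : ∀ v, ⟪v, W v⟫ ≤ lammax * ‖v‖ ^ 2)
    (z : EuclideanSpace ℝ (Fin m)) :
    H (z - (1 / (L * lammax)) • W (gradH z)) ≤
      H z - (1 / (L * lammax)) * lammin / 2 * ⟪gradH z, P (gradH z)⟫ := by
  set g := gradH z
  set θ := 1 / (L * lammax)
  have hW : W.IsPositive :=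
    W.isPositive_iff.mpr ⟨hWsym, fun v => real_inner_comm (W v) v ▸ hWpsd v⟩
  have hθ : 0 ≤ θ := by positivity
  calc H (z - θ • W g) ≤ H z - θ / 2 * ⟪g, W g⟫ :=
        le_sub_of_quadratic_upper_bound (hsmooth z) hW hmax hL.le
          (mul_one_div_cancel (by positivity))
    _ ≤ H z - θ * lammin / 2 * ⟪g, P g⟫ := by
        linarith [mul_le_mul_of_nonneg_left (hmin g) hθ]

theorem stmt_1 {m : ℕ} (H : EuclideanSpace ℝ (Fin m) → ℝ)
    (gradH : EuclideanSpace ℝ (Fin m) → EuclideanSpace ℝ (Fin m))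
    (L lammin lammax : ℝ) (hL : 0 < L) (hlmin : 0 < lammin) (hlmax : 0 < lammax)
    (hdiff : ∀ x, HasGradientAt H (gradH x) x)
    (hsmooth : ∀ x y, H y ≤ H x + ⟪gradH x, y - x⟫ + L / 2 * ‖y - x‖ ^ 2)
    (W P : EuclideanSpace ℝ (Fin m) →ₗ[ℝ] EuclideanSpace ℝ (Fin m))
    (hWsym : ∀ u v, ⟪W u, v⟫ = ⟪u, W v⟫) (hWpsd : ∀ v, 0 ≤ ⟪v, W v⟫)
    (hPsym : ∀ u v, ⟪P u, v⟫ = ⟪u, P v⟫) (hPpsd : ∀ v, 0 ≤ ⟪v, P v⟫)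
    (hPproj : P ∘ₗ P = P) (hPW : P ∘ₗ W = W) (hWP : W ∘ₗ P = W)
    (hmin : ∀ v, lammin * ⟪v, P v⟫ ≤ ⟪v, W v⟫)
    (hmax : ∀ v, ⟪v, W v⟫ ≤ lammax * ‖v‖ ^ 2)
    (z : EuclideanSpace ℝ (Fin m))
    (hzP : P (gradH z) = gradH z) :
    H (z - (1 / (L * lammax)) • W (gradH z)) ≤
      H z - (1 / (L * lammax)) * lammin / 2 * ⟪gradH z, P (gradH z)⟫ :=
  stmt_1_general H gradH L lammin lammax hL hlmax hsmooth W P hWsym hWpsd hmin hmax z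
end

section
/- Let A be a real m×n matrix, b ∈ range A, and P a polynomial with P(0) = 0 and P(λ) ≠ 0 for all nonzero eigenvalues λ of AᵀA. Write P(x) = x·P'(x). Then for all x ∈ ℝⁿ: Ax = b if and only if P(AᵀA) x = P'(AᵀA) Aᵀ b. -/
/-!
Write `M = AᵀA`. Since `P = X * P'`, `P(M) x = P'(M) Aᵀ (A x)`, which gives the forward direction.
Conversely, with `A x₀ = b`, the hypothesis says `P(M) (x - x₀) = 0`. The function `μ ↦ μ / P(μ)`
satisfies `μ = (μ / P(μ)) P(μ)` on the (finite) spectrum of the symmetric matrix `M`, because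
`P` vanishes on it only at `0`; the functional calculus then factors `M = C P(M)`, so
`M (x - x₀) = 0`, and `ker AᵀA = ker A` gives `A x = A x₀ = b`.
-/

open Matrix Polynomial

theorem Matrix.aeval_X_mul_mulVec {R n : Type*} [CommRing R] [Fintype n] [DecidableEq n]
    (M : Matrix n n R) (q : R[X]) (v : n → R) :
    aeval M (X * q) *ᵥ v = aeval M q *ᵥ (M *ᵥ v) := by
  rw [mul_comm, map_mul, aeval_X, mulVec_mulVec]

namespace Matrix.IsHermitian

variable {𝕜 n : Type*} [RCLike 𝕜] [Fintype n] [DecidableEq n] {M : Matrix n n 𝕜}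

theorem exists_mul_aeval_eq_self (hM : M.IsHermitian) (q : ℝ[X])
    (hq : ∀ μ ∈ spectrum ℝ M, μ ≠ 0 → q.eval μ ≠ 0) :
    ∃ C : Matrix n n 𝕜, M = C * aeval M q := by
  have hcont (f : ℝ → ℝ) : ContinuousOn f (spectrum ℝ M) := M.finite_real_spectrum.continuousOn f
  refine ⟨cfc (fun μ ↦ μ / q.eval μ) M, ?_⟩
  -- at `μ = 0` both sides vanish because `0 / q.eval 0 = 0`, whatever `q.eval 0` is
  have hfactor : (spectrum ℝ M).EqOn id (fun μ ↦ μ / q.eval μ * q.eval μ) := fun μ hμ ↦ by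
    rcases eq_or_ne μ 0 with rfl | hμ0
    · simp
    · simp [div_mul_cancel₀ _ (hq μ hμ hμ0)]
  rw [← cfc_polynomial q M, ← cfc_mul _ _ M (hcont _) (hcont _), ← cfc_congr hfactor,
    cfc_id ℝ M]

theorem mulVec_eq_zero_of_aeval_mulVec_eq_zero (hM : M.IsHermitian) {q : ℝ[X]}
    (hq : ∀ μ ∈ spectrum ℝ M, μ ≠ 0 → q.eval μ ≠ 0) {v : n → 𝕜} (hv : aeval M q *ᵥ v = 0) :
    M *ᵥ v = 0 := by
  obtain ⟨C, hC⟩ := hM.exists_mul_aeval_eq_self q hq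
  rw [hC, ← mulVec_mulVec, hv, mulVec_zero]

end Matrix.IsHermitian

theorem stmt_7 {m n : ℕ} (A : Matrix (Fin m) (Fin n) ℝ) (b : Fin m → ℝ)
    (hb : ∃ x₀ : Fin n → ℝ, A.mulVec x₀ = b)
    (P P' : Polynomial ℝ) (hPP' : P = Polynomial.X * P')
    (hP : ∀ μ : ℝ, μ ≠ 0 →
      Module.End.HasEigenvalue (Matrix.toLin' (Aᵀ * A)) μ → P.eval μ ≠ 0)
    (x : Fin n → ℝ) :
    A.mulVec x = b ↔
      (Polynomial.aeval (Aᵀ * A) P).mulVec x =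
        (Polynomial.aeval (Aᵀ * A) P').mulVec (Aᵀ.mulVec b) := by
  obtain ⟨x₀, rfl⟩ := hb
  have hM : (Aᵀ * A).IsHermitian := by
    simpa using isHermitian_conjTranspose_mul_self A
  have hspec : ∀ μ ∈ spectrum ℝ (Aᵀ * A), μ ≠ 0 → P.eval μ ≠ 0 := fun μ hμ hμ0 ↦
    hP μ hμ0 (Module.End.hasEigenvalue_iff_mem_spectrum.mpr (by rwa [spectrum_toLin']))
  have hfactor (z : Fin n → ℝ) : aeval (Aᵀ * A) P *ᵥ z = aeval (Aᵀ * A) P' *ᵥ (Aᵀ *ᵥ (A *ᵥ z)) := by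
    rw [hPP', aeval_X_mul_mulVec, ← mulVec_mulVec]
  rw [hfactor]
  refine ⟨fun h ↦ by rw [h], fun h ↦ ?_⟩
  have hPker : aeval (Aᵀ * A) P *ᵥ (x - x₀) = 0 := by
    rw [mulVec_sub, hfactor, hfactor, h, sub_self]
  have hMker := hM.mulVec_eq_zero_of_aeval_mulVec_eq_zero hspec hPker
  have hAker : x - x₀ ∈ LinearMap.ker A.mulVecLin := by
    rw [← ker_mulVecLin_transpose_mul_self]
    exact hMker
  rwa [LinearMap.mem_ker, mulVecLin_apply, mulVec_sub, sub_eq_zero] at hAker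
end

section
/- Let W be a symmetric matrix with 0 ⪯ W ⪯ I and with eigenvalues either 0 or in [λ_min⁺, 1], λ_min⁺ > 0. Let K = ⌈(1/λ_min⁺)·ln 2⌉ and define D(W) = I - (I - W)^K. Then D(W) is symmetric PSD, ker D(W) = ker W, and all nonzero eigenvalues of D(W) lie in [1/2, 1]; in particular λ_max(D(W))/λ_min⁺(D(W)) ≤ 2. -/
/-!
On the spectrum, `1 - (1 - W)^K` acts by the scalar map `x ↦ 1 - (1 - x)^K`, which fixes `0`
and sends `[λ, 1]` into `[1/2, 1]` because `(1 - x)^K ≤ e^{-Kλ} ≤ 1/2` once `Kλ ≥ ln 2`.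
For the kernels, `1 - (1 - W)^K = P W` with `P = ∑_{i<K} (1 - W)^i ⪰ 1` invertible.
-/

open Matrix

lemma le_natCeil_one_div_mul_mul {m : ℝ} (hm : 0 < m) (c : ℝ) : c ≤ ⌈(1 / m) * c⌉₊ * m :=
  calc c = (1 / m) * c * m := by field_simp
    _ ≤ ⌈(1 / m) * c⌉₊ * m := by gcongr; exact Nat.le_ceil _

lemma Real.one_sub_pow_le_exp_neg_mul {m x : ℝ} (hmx : m ≤ x) (hx1 : x ≤ 1) (K : ℕ) :
    (1 - x) ^ K ≤ Real.exp (-(K * m)) :=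
  calc (1 - x) ^ K ≤ Real.exp (-x) ^ K :=
        pow_le_pow_left₀ (by linarith) (Real.one_sub_le_exp_neg x) K
    _ = Real.exp (-(K * x)) := by rw [← Real.exp_nat_mul, mul_neg]
    _ ≤ Real.exp (-(K * m)) := by gcongr

lemma one_sub_one_sub_pow_eq_zero_or_mem {m x : ℝ} {K : ℕ}
    (hx : x = 0 ∨ (m ≤ x ∧ x ≤ 1)) (hK : Real.log 2 ≤ K * m) :
    1 - (1 - x) ^ K = 0 ∨ (1 / 2 ≤ 1 - (1 - x) ^ K ∧ 1 - (1 - x) ^ K ≤ 1) := by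
  rcases hx with rfl | ⟨hmx, hx1⟩
  · simp
  · have hhalf : (1 - x) ^ K ≤ 1 / 2 :=
      calc (1 - x) ^ K ≤ Real.exp (-(K * m)) := Real.one_sub_pow_le_exp_neg_mul hmx hx1 K
        _ ≤ Real.exp (-Real.log 2) := by gcongr
        _ = 1 / 2 := by rw [Real.exp_neg, Real.exp_log two_pos, one_div]
    have := pow_nonneg (sub_nonneg.2 hx1) K
    right; constructor <;> linarith

lemma cfc_one_sub_one_sub_pow {A : Type*} [Ring A] [StarRing A] [Algebra ℝ A]
    [TopologicalSpace A] [ContinuousFunctionalCalculus ℝ A IsSelfAdjoint]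
    {a : A} (ha : IsSelfAdjoint a) (K : ℕ) :
    cfc (fun x : ℝ => 1 - (1 - x) ^ K) a = 1 - (1 - a) ^ K := by
  rw [cfc_sub .., cfc_const_one .., cfc_pow .., cfc_sub .., cfc_const_one .., cfc_id' ..]

lemma Matrix.hasEigenvalue_toLin'_iff_mem_spectrum {K n : Type*} [Field K] [Fintype n]
    [DecidableEq n] {A : Matrix n n K} {μ : K} :
    Module.End.HasEigenvalue (toLin' A) μ ↔ μ ∈ spectrum K A := by
  rw [Module.End.hasEigenvalue_iff_mem_spectrum, spectrum_toLin']

lemma Matrix.mulVec_one_sub_one_sub_pow_eq_zero_iff {K n : Type*} [Field K] [PartialOrder K]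
    [StarRing K] [StarOrderedRing K] [Fintype n] [DecidableEq n] {A : Matrix n n K}
    (hA : (1 - A).PosSemidef) {k : ℕ} (hk : k ≠ 0) (v : n → K) :
    (1 - (1 - A) ^ k) *ᵥ v = 0 ↔ A *ᵥ v = 0 := by
  set P := ∑ i ∈ Finset.range k, (1 - A) ^ i
  have hfactor : 1 - (1 - A) ^ k = P * A := by simpa using (geom_sum_mul_neg (1 - A) k).symm
  have hP : P.PosDef := by
    obtain ⟨j, rfl⟩ := Nat.exists_eq_succ_of_ne_zero hk
    rw [show P = _ from Finset.sum_range_succ' _ j, pow_zero]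
    exact PosDef.posSemidef_add (posSemidef_sum _ fun i _ => hA.pow (i + 1)) PosDef.one
  rw [hfactor, ← mulVec_mulVec]
  exact (mulVec_injective_iff_isUnit.2 hP.isUnit).eq_iff' (mulVec_zero P)

theorem stmt_17 {n : ℕ} (W : Matrix (Fin n) (Fin n) ℝ) (lammin : ℝ)
    (hlam : 0 < lammin)
    (hpsd : W.PosSemidef) (hle1 : (1 - W).PosSemidef)
    (heig : ∀ μ : ℝ, Module.End.HasEigenvalue (Matrix.toLin' W) μ →
      μ = 0 ∨ (lammin ≤ μ ∧ μ ≤ 1))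
    (K : ℕ) (hK : K = ⌈(1 / lammin) * Real.log 2⌉₊)
    (D : Matrix (Fin n) (Fin n) ℝ) (hD : D = 1 - (1 - W) ^ K) :
    D.PosSemidef ∧
    (∀ v : Fin n → ℝ, W.mulVec v = 0 ↔ D.mulVec v = 0) ∧
    (∀ μ : ℝ, Module.End.HasEigenvalue (Matrix.toLin' D) μ →
      μ = 0 ∨ (1 / 2 ≤ μ ∧ μ ≤ 1)) ∧
    (∀ μ₁ μ₂ : ℝ, Module.End.HasEigenvalue (Matrix.toLin' D) μ₁ → μ₁ ≠ 0 →
      Module.End.HasEigenvalue (Matrix.toLin' D) μ₂ → μ₂ ≠ 0 →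
      μ₁ ≤ 2 * μ₂) := by
  have hKlam : Real.log 2 ≤ K * lammin := hK ▸ le_natCeil_one_div_mul_mul hlam _
  have hK0 : K ≠ 0 := by
    rintro rfl
    rw [Nat.cast_zero, zero_mul] at hKlam
    linarith [Real.log_pos one_lt_two]
  have hspec : ∀ μ ∈ spectrum ℝ D, μ = 0 ∨ (1 / 2 ≤ μ ∧ μ ≤ 1) := by
    have hW : IsSelfAdjoint W := hpsd.isHermitian.isSelfAdjoint
    rw [hD, ← cfc_one_sub_one_sub_pow hW, cfc_map_spectrum _ _ hW]
    rintro _ ⟨x, hx, rfl⟩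
    exact one_sub_one_sub_pow_eq_zero_or_mem
      (heig x (hasEigenvalue_toLin'_iff_mem_spectrum.2 hx)) hKlam
  simp only [hasEigenvalue_toLin'_iff_mem_spectrum]
  refine ⟨?_, fun v => ?_, hspec, fun μ₁ μ₂ h₁ hne₁ h₂ hne₂ => ?_⟩
  · refine posSemidef_iff_isHermitian_and_spectrum_nonneg.2 ⟨?_, fun μ hμ => ?_⟩
    · exact hD ▸ isHermitian_one.sub (hle1.isHermitian.pow K)
    · show 0 ≤ μ
      exact (hspec μ hμ).elim ge_of_eq fun h => by linarith [h.1]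
  · rw [hD, mulVec_one_sub_one_sub_pow_eq_zero_iff hle1 hK0]
  · obtain ⟨-, hμ₁⟩ := (hspec μ₁ h₁).resolve_left hne₁
    obtain ⟨hμ₂, -⟩ := (hspec μ₂ h₂).resolve_left hne₂
    linarith
end
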